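/- Let C_n denote the n-th Catalan number, C_n = (1/(n+1)) * binom(2n, n). Define a sequence b_n by the recurrence b_n = 2*b_{n-1} + sum_{j=2}^{n-1} C_{j-1}*C_{n-j} with initial condition b_1 = C_1 - 1 = 0. Then for all n ≥ 1, b_n = C_n - 2^{n-1}. -/
import Mathlib

lemma catalan_key (m : ℕ) :
    catalan (m + 2) = 2 * catalan (m + 1) +
      ∑ j ∈ Finset.Icc 2 (m + 1), catalan (j - 1) * catalan (m + 2 - j) := by
  have h1 : ∑ j ∈ Finset.Icc 2 (m + 1), catalan (j - 1) * catalan (m + 2 - j)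
      = ∑ i ∈ Finset.range m, catalan (i + 1) * catalan (m - i) := by
    rw [← Finset.Ico_add_one_right_eq_Icc, Finset.sum_Ico_eq_sum_range]
    refine Finset.sum_congr (by simp) fun i hi => ?_
    simp only [Finset.mem_range] at hi
    congr 1 <;> congr 1 <;> omega
  rw [h1, catalan_succ, Fin.sum_univ_eq_sum_range (fun i => catalan i * catalan (m + 1 - i)), Finset.sum_range_succ',
    Finset.sum_range_succ]
  have e1 : ∀ i, i < m → catalan (i + 1) * catalan (m + 1 - (i + 1))
      = catalan (i + 1) * catalan (m - i) := by
    intro i hi; congr 2; omega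
  rw [Finset.sum_congr rfl fun i hi => e1 i (Finset.mem_range.mp hi)]
  simp [catalan_zero, Nat.sub_self]
  ring_nf

/-- b_n = 2 b_{n-1} + ∑_{j=2}^{n-1} C_{j-1} C_{n-j}, b_1 = 0,
implies b_n = C_n - 2^{n-1} for all n ≥ 1. -/
theorem silted_nonhereditary_count (b : ℕ → ℤ)
    (hb1 : b 1 = 0)
    (hrec : ∀ n, 2 ≤ n →
      b n = 2 * b (n - 1) +
        ∑ j ∈ Finset.Icc 2 (n - 1), (catalan (j - 1) : ℤ) * (catalan (n - j) : ℤ)) :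
    ∀ n, 1 ≤ n → b n = (catalan n : ℤ) - 2 ^ (n - 1) := by
  intro n hn
  induction n, hn using Nat.le_induction with
  | base => simp [hb1, catalan_one]
  | succ n hn ih =>
    obtain ⟨m, rfl⟩ : ∃ m, n = m + 1 := ⟨n - 1, by omega⟩
    have h := hrec (m + 2) (by omega)
    simp only [show m + 2 - 1 = m + 1 from rfl] at h
    have hs : ∑ j ∈ Finset.Icc 2 (m + 1), (catalan (j - 1) : ℤ) * (catalan (m + 2 - j) : ℤ)
        = ((∑ j ∈ Finset.Icc 2 (m + 1), catalan (j - 1) * catalan (m + 2 - j) : ℕ) : ℤ) := by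
      push_cast; rfl
    have hk := catalan_key m
    have hk' : (catalan (m + 2) : ℤ) = 2 * catalan (m + 1) +
        ((∑ j ∈ Finset.Icc 2 (m + 1), catalan (j - 1) * catalan (m + 2 - j) : ℕ) : ℤ) := by
      exact_mod_cast congrArg (Nat.cast : ℕ → ℤ) hk
    rw [h, hs, ih]
    have : (2:ℤ) ^ (m + 2 - 1) = 2 * 2 ^ (m + 1 - 1) := by
      rw [show m + 2 - 1 = (m + 1 - 1) + 1 from rfl, pow_succ]; ring
    rw [this]
    linarith [hk']
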